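/- For any MAC W : X1 × X2 → Y on finite alphabets and positive integers k1, k2, the non-signaling assisted success probability S^NS(W,k1,k2) equals the value of the following linear program: maximize (1/(k1 k2)) Σ_{x1,x2,y} W(y|x1,x2) r_{x1,x2,y} over real families r, r^1, r^2 (indexed by X1×X2×Y) and p (indexed by X1×X2) subject to: Σ_{x1,x2} r_{x1,x2,y} = 1 for all y; Σ_{x1} r^1_{x1,x2,y} = k1 Σ_{x1} r_{x1,x2,y} for all x2,y; Σ_{x2} r^2_{x1,x2,y} = k2 Σ_{x2} r_{x1,x2,y} for all x1,y; Σ_{x1} p_{x1,x2} = k1 Σ_{x1} r^2_{x1,x2,y} for all x2,y; Σ_{x2} p_{x1,x2} = k2 Σ_{x2} r^1_{x1,x2,y} for all x1,y; 0 ≤ r_{x1,x2,y}, r_{x1,x2,y} ≤ r^1_{x1,x2,y} ≤ p_{x1,x2}, r_{x1,x2,y} ≤ r^2_{x1,x2,y} ≤ p_{x1,x2}; and p_{x1,x2} − r^1_{x1,x2,y} − r^2_{x1,x2,y} + r_{x1,x2,y} ≥ 0 for all x1,x2,y. -/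

import Mathlib

open Finset

/-!
A non-signaling box summed over the inputs is a feasible point of the linear program with the
same value: `r` collects the mass on which both messages are decoded correctly, `r1` (resp. `r2`)
the mass on which the second (resp. first) one is, and `p` the total mass, which does not depend
on `y`. Each equality constraint holds because a sum over all inputs `i1` of a quantity that by
non-signaling does not depend on `i1` is `k1` times its value at `i1 = j1`.

Conversely, a feasible point gives the box that puts `r / (k1 k2)` on the correct pair of
messages and spreads `r2 - r`, `r1 - r` and `p - r1 - r2 + r` uniformly over the pairs on which
only the second, only the first, or both messages are wrong; the constraints of the linear
program are exactly what makes this box non-signaling with the right success probability.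
-/

/-- A tripartite non-signaling box `P(x1,x2,(j1,j2)|i1,i2,y)` between the two senders
and the receiver, with `k1` and `k2` messages.  Arguments of `P` are in the order
`x1 x2 j1 j2 i1 i2 y`. -/
def IsNSBox {X1 X2 Y : Type*} [Fintype X1] [Fintype X2] [Fintype Y] (k1 k2 : ℕ)
    (P : X1 → X2 → Fin k1 → Fin k2 → Fin k1 → Fin k2 → Y → ℝ) : Prop :=
  (∀ x1 x2 j1 j2 i1 i2 y, 0 ≤ P x1 x2 j1 j2 i1 i2 y) ∧
  (∀ i1 i2 y, ∑ x1, ∑ x2, ∑ j1, ∑ j2, P x1 x2 j1 j2 i1 i2 y = 1) ∧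
  (∀ x2 j1 j2 i1 i1' i2 y,
    ∑ x1, P x1 x2 j1 j2 i1 i2 y = ∑ x1, P x1 x2 j1 j2 i1' i2 y) ∧
  (∀ x1 j1 j2 i1 i2 i2' y,
    ∑ x2, P x1 x2 j1 j2 i1 i2 y = ∑ x2, P x1 x2 j1 j2 i1 i2' y) ∧
  (∀ x1 x2 i1 i2 y y',
    ∑ j1, ∑ j2, P x1 x2 j1 j2 i1 i2 y = ∑ j1, ∑ j2, P x1 x2 j1 j2 i1 i2 y')

/-- `S^{NS}(W,k1,k2)`: maximum joint success probability with (tripartite)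
non-signaling assistance between both senders and the receiver. -/
noncomputable def SNS {X1 X2 Y : Type*} [Fintype X1] [Fintype X2] [Fintype Y]
    (W : X1 → X2 → Y → ℝ) (k1 k2 : ℕ) : ℝ :=
  sSup {s : ℝ | ∃ P : X1 → X2 → Fin k1 → Fin k2 → Fin k1 → Fin k2 → Y → ℝ,
    IsNSBox k1 k2 P ∧
    s = (1 / ((k1 : ℝ) * (k2 : ℝ))) * ∑ i1, ∑ i2, ∑ x1, ∑ x2, ∑ y,
      W x1 x2 y * P x1 x2 i1 i2 i1 i2 y}

structure IsLPFeasible {X1 X2 Y : Type*} [Fintype X1] [Fintype X2] (k1 k2 : ℕ)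
    (r r1 r2 : X1 → X2 → Y → ℝ) (p : X1 → X2 → ℝ) : Prop where
  sum_r : ∀ y, ∑ x1, ∑ x2, r x1 x2 y = 1
  sum_r1 : ∀ x2 y, ∑ x1, r1 x1 x2 y = (k1 : ℝ) * ∑ x1, r x1 x2 y
  sum_r2 : ∀ x1 y, ∑ x2, r2 x1 x2 y = (k2 : ℝ) * ∑ x2, r x1 x2 y
  sum_p_eq_r2 : ∀ x2 y, ∑ x1, p x1 x2 = (k1 : ℝ) * ∑ x1, r2 x1 x2 y
  sum_p_eq_r1 : ∀ x1 y, ∑ x2, p x1 x2 = (k2 : ℝ) * ∑ x2, r1 x1 x2 y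
  r_nonneg : ∀ x1 x2 y, 0 ≤ r x1 x2 y
  r_le_r1 : ∀ x1 x2 y, r x1 x2 y ≤ r1 x1 x2 y
  r1_le_p : ∀ x1 x2 y, r1 x1 x2 y ≤ p x1 x2
  r_le_r2 : ∀ x1 x2 y, r x1 x2 y ≤ r2 x1 x2 y
  r2_le_p : ∀ x1 x2 y, r2 x1 x2 y ≤ p x1 x2
  inclusion_exclusion : ∀ x1 x2 y, 0 ≤ p x1 x2 - r1 x1 x2 y - r2 x1 x2 y + r x1 x2 y

lemma sum_sum_eq_card_nsmul_sum_diag {ι M : Type*} [Fintype ι] [AddCommMonoid M]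
    (g : ι → ι → M) (hg : ∀ j i i', g j i = g j i') :
    ∑ i, ∑ j, g j i = Fintype.card ι • ∑ j, g j j := by
  rw [← card_univ, ← sum_const]
  exact sum_congr rfl fun i _ => sum_congr rfl fun j _ => hg j i j

lemma sum_add_sum_le_sum_sum_add {ι κ M : Type*} [Fintype ι] [Fintype κ] [DecidableEq ι]
    [DecidableEq κ] [AddCommMonoid M] [PartialOrder M] [IsOrderedAddMonoid M] {f : ι → κ → M}
    (hf : ∀ a b, 0 ≤ f a b) (i : ι) (j : κ) :
    ∑ a, f a j + ∑ b, f i b ≤ ∑ a, ∑ b, f a b + f i j := by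
  have hsplit : ∑ a, ∑ b, f a b = ∑ a, f a j + ∑ b ∈ {j}ᶜ, f i b +
      ∑ a ∈ {i}ᶜ, ∑ b ∈ {j}ᶜ, f a b := by
    simp only [Fintype.sum_eq_add_sum_compl j, sum_add_distrib, Fintype.sum_eq_add_sum_compl i
      (fun a => ∑ b ∈ {j}ᶜ, f a b), add_assoc]
  rw [hsplit, Fintype.sum_eq_add_sum_compl j (f i)]
  calc _ ≤ ∑ a, f a j + (f i j + ∑ b ∈ {j}ᶜ, f i b) + ∑ a ∈ {i}ᶜ, ∑ b ∈ {j}ᶜ, f a b :=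
        le_add_of_nonneg_right (sum_nonneg fun a _ => sum_nonneg fun b _ => hf a b)
    _ = _ := by abel

section lpOfBox
variable {X1 X2 Y : Type*} {k1 k2 : ℕ}
  (P : X1 → X2 → Fin k1 → Fin k2 → Fin k1 → Fin k2 → Y → ℝ)

def lpR (x1 : X1) (x2 : X2) (y : Y) : ℝ := ∑ i1, ∑ i2, P x1 x2 i1 i2 i1 i2 y

def lpR1 (x1 : X1) (x2 : X2) (y : Y) : ℝ := ∑ i1, ∑ i2, ∑ j1, P x1 x2 j1 i2 i1 i2 y

def lpR2 (x1 : X1) (x2 : X2) (y : Y) : ℝ := ∑ i1, ∑ i2, ∑ j2, P x1 x2 i1 j2 i1 i2 y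

def lpP (x1 : X1) (x2 : X2) (y : Y) : ℝ := ∑ i1, ∑ i2, ∑ j1, ∑ j2, P x1 x2 j1 j2 i1 i2 y

variable {P} [Fintype X1] [Fintype X2] [Fintype Y]

lemma IsNSBox.sum_sum_eq (hP : IsNSBox k1 k2 P) (j1 : Fin k1) (j2 : Fin k2)
    (i1 i1' : Fin k1) (i2 i2' : Fin k2) (y : Y) :
    ∑ x1, ∑ x2, P x1 x2 j1 j2 i1 i2 y = ∑ x1, ∑ x2, P x1 x2 j1 j2 i1' i2' y := by
  obtain ⟨-, -, hN1, hN2, -⟩ := hP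
  calc ∑ x1, ∑ x2, P x1 x2 j1 j2 i1 i2 y
      = ∑ x1, ∑ x2, P x1 x2 j1 j2 i1 i2' y :=
        sum_congr rfl fun x1 _ => hN2 x1 j1 j2 i1 i2 i2' y
    _ = ∑ x2, ∑ x1, P x1 x2 j1 j2 i1 i2' y := sum_comm
    _ = ∑ x2, ∑ x1, P x1 x2 j1 j2 i1' i2' y :=
        sum_congr rfl fun x2 _ => hN1 x2 j1 j2 i1 i1' i2' y
    _ = ∑ x1, ∑ x2, P x1 x2 j1 j2 i1' i2' y := sum_comm

lemma IsNSBox.exists_eq_lpP (hP : IsNSBox k1 k2 P) :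
    ∃ p : X1 → X2 → ℝ, ∀ x1 x2 y, p x1 x2 = lpP P x1 x2 y := by
  rcases isEmpty_or_nonempty Y with hY | ⟨⟨y0⟩⟩
  · exact ⟨0, fun _ _ y => isEmptyElim y⟩
  · refine ⟨fun x1 x2 => lpP P x1 x2 y0, fun x1 x2 y => ?_⟩
    obtain ⟨-, -, -, -, hNr⟩ := hP
    exact sum_congr rfl fun i1 _ => sum_congr rfl fun i2 _ => hNr x1 x2 i1 i2 y0 y

lemma IsNSBox.sum_sum_lpR (hP : IsNSBox k1 k2 P) (hk1 : 0 < k1) (hk2 : 0 < k2) (y : Y) :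
    ∑ x1, ∑ x2, lpR P x1 x2 y = 1 := by
  calc ∑ x1, ∑ x2, lpR P x1 x2 y
      = ∑ i1, ∑ i2, ∑ x1, ∑ x2, P x1 x2 i1 i2 i1 i2 y := by
        simp only [lpR, sum_comm (γ := X1) (α := Fin k1), sum_comm (γ := X1) (α := Fin k2),
          sum_comm (γ := X2) (α := Fin k1), sum_comm (γ := X2) (α := Fin k2)]
    _ = ∑ i1, ∑ i2, ∑ x1, ∑ x2, P x1 x2 i1 i2 ⟨0, hk1⟩ ⟨0, hk2⟩ y :=
        sum_congr rfl fun i1 _ => sum_congr rfl fun i2 _ => hP.sum_sum_eq _ _ _ _ _ _ y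
    _ = 1 := by
        rw [← hP.2.1 ⟨0, hk1⟩ ⟨0, hk2⟩ y]
        simp only [sum_comm (γ := X1) (α := Fin k1), sum_comm (γ := X1) (α := Fin k2),
          sum_comm (γ := X2) (α := Fin k1), sum_comm (γ := X2) (α := Fin k2)]

lemma IsNSBox.sum_lpR1 (hP : IsNSBox k1 k2 P) (x2 : X2) (y : Y) :
    ∑ x1, lpR1 P x1 x2 y = (k1 : ℝ) * ∑ x1, lpR P x1 x2 y := by
  obtain ⟨-, -, hN1, -, -⟩ := hP
  simp only [lpR1, lpR, sum_comm (γ := X1), sum_comm (γ := Fin k2) (α := Fin k1)]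
  rw [sum_sum_eq_card_nsmul_sum_diag _ fun j i i' => sum_congr rfl fun i2 _ =>
    hN1 x2 j i2 i i' i2 y, Fintype.card_fin, nsmul_eq_mul]

lemma IsNSBox.sum_lpR2 (hP : IsNSBox k1 k2 P) (x1 : X1) (y : Y) :
    ∑ x2, lpR2 P x1 x2 y = (k2 : ℝ) * ∑ x2, lpR P x1 x2 y := by
  obtain ⟨-, -, -, hN2, -⟩ := hP
  simp only [lpR2, lpR, sum_comm (γ := X2), sum_comm (γ := Fin k1) (α := Fin k2)]
  rw [sum_sum_eq_card_nsmul_sum_diag _ fun j i i' => sum_congr rfl fun i1 _ =>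
    hN2 x1 i1 j i1 i i' y, Fintype.card_fin, nsmul_eq_mul]

lemma IsNSBox.sum_lpP_eq_lpR2 (hP : IsNSBox k1 k2 P) (x2 : X2) (y : Y) :
    ∑ x1, lpP P x1 x2 y = (k1 : ℝ) * ∑ x1, lpR2 P x1 x2 y := by
  obtain ⟨-, -, hN1, -, -⟩ := hP
  simp only [lpP, lpR2, sum_comm (γ := X1), sum_comm (γ := Fin k2) (α := Fin k1)]
  rw [sum_sum_eq_card_nsmul_sum_diag _ fun j i i' => sum_congr rfl fun i2 _ =>
    sum_congr rfl fun j2 _ => hN1 x2 j j2 i i' i2 y, Fintype.card_fin, nsmul_eq_mul]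

lemma IsNSBox.sum_lpP_eq_lpR1 (hP : IsNSBox k1 k2 P) (x1 : X1) (y : Y) :
    ∑ x2, lpP P x1 x2 y = (k2 : ℝ) * ∑ x2, lpR1 P x1 x2 y := by
  obtain ⟨-, -, -, hN2, -⟩ := hP
  simp only [lpP, lpR1, sum_comm (γ := X2), sum_comm (γ := Fin k1) (α := Fin k2)]
  rw [sum_sum_eq_card_nsmul_sum_diag _ fun j i i' => sum_congr rfl fun i1 _ =>
    sum_congr rfl fun j1 _ => hN2 x1 j1 j i1 i i' y, Fintype.card_fin, nsmul_eq_mul]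

lemma IsNSBox.lpP_sub_lpR1_sub_lpR2_add_lpR_nonneg (hP : IsNSBox k1 k2 P) (x1 : X1) (x2 : X2)
    (y : Y) : 0 ≤ lpP P x1 x2 y - lpR1 P x1 x2 y - lpR2 P x1 x2 y + lpR P x1 x2 y := by
  have hP0 := hP.1
  have hie := sum_le_sum fun i1 (_ : i1 ∈ univ) => sum_le_sum fun i2 (_ : i2 ∈ univ) =>
    sum_add_sum_le_sum_sum_add (f := fun j1 j2 => P x1 x2 j1 j2 i1 i2 y) (hP0 x1 x2 · · i1 i2 y)
      i1 i2
  simp only [sum_add_distrib] at hie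
  unfold lpP lpR1 lpR2 lpR
  linarith

theorem IsNSBox.isLPFeasible (hP : IsNSBox k1 k2 P) (hk1 : 0 < k1) (hk2 : 0 < k2)
    {p : X1 → X2 → ℝ} (hp : ∀ x1 x2 y, p x1 x2 = lpP P x1 x2 y) :
    IsLPFeasible k1 k2 (lpR P) (lpR1 P) (lpR2 P) p := by
  have hP0 := hP.1
  refine ⟨hP.sum_sum_lpR hk1 hk2, hP.sum_lpR1, hP.sum_lpR2, fun x2 y => ?_, fun x1 y => ?_,
    fun x1 x2 y => ?_, fun x1 x2 y => ?_, fun x1 x2 y => ?_, fun x1 x2 y => ?_,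
    fun x1 x2 y => ?_, fun x1 x2 y => ?_⟩
  · simpa only [hp _ _ y] using hP.sum_lpP_eq_lpR2 x2 y
  · simpa only [hp _ _ y] using hP.sum_lpP_eq_lpR1 x1 y
  · exact sum_nonneg fun i1 _ => sum_nonneg fun i2 _ => hP0 x1 x2 i1 i2 i1 i2 y
  · exact sum_le_sum fun i1 _ => sum_le_sum fun i2 _ =>
      single_le_sum (f := fun j1 => P x1 x2 j1 i2 i1 i2 y) (fun j1 _ => hP0 ..) (mem_univ i1)
  · rw [hp x1 x2 y]
    exact sum_le_sum fun i1 _ => sum_le_sum fun i2 _ => sum_le_sum fun j1 _ =>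
      single_le_sum (f := fun j2 => P x1 x2 j1 j2 i1 i2 y) (fun j2 _ => hP0 ..) (mem_univ i2)
  · exact sum_le_sum fun i1 _ => sum_le_sum fun i2 _ =>
      single_le_sum (f := fun j2 => P x1 x2 i1 j2 i1 i2 y) (fun j2 _ => hP0 ..) (mem_univ i2)
  · rw [hp x1 x2 y]
    exact sum_le_sum fun i1 _ => sum_le_sum fun i2 _ =>
      single_le_sum (f := fun j1 => ∑ j2, P x1 x2 j1 j2 i1 i2 y)
        (fun j1 _ => sum_nonneg fun j2 _ => hP0 ..) (mem_univ i1)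
  · rw [hp x1 x2 y]
    exact hP.lpP_sub_lpR1_sub_lpR2_add_lpR_nonneg x1 x2 y

lemma sum_mul_diag_eq_sum_mul_lpR (W : X1 → X2 → Y → ℝ) :
    ∑ i1, ∑ i2, ∑ x1, ∑ x2, ∑ y, W x1 x2 y * P x1 x2 i1 i2 i1 i2 y =
      ∑ x1, ∑ x2, ∑ y, W x1 x2 y * lpR P x1 x2 y := by
  simp only [lpR, mul_sum, sum_comm (γ := Fin k1) (α := X1), sum_comm (γ := Fin k1) (α := X2),
    sum_comm (γ := Fin k1) (α := Y), sum_comm (γ := Fin k2) (α := X1),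
    sum_comm (γ := Fin k2) (α := X2), sum_comm (γ := Fin k2) (α := Y)]

end lpOfBox

noncomputable def spread (k : ℕ) (i j : Fin k) (a b : ℝ) : ℝ :=
  if j = i then a else b / ((k : ℝ) - 1)

section spread
variable {k : ℕ} {i j : Fin k} {a b : ℝ}

@[simp] lemma spread_self (i : Fin k) (a b : ℝ) : spread k i i a b = a := if_pos rfl

lemma spread_nonneg (ha : 0 ≤ a) (hb : 0 ≤ b) : 0 ≤ spread k i j a b := by
  have : (1 : ℝ) ≤ k := by exact_mod_cast i.pos
  unfold spread
  split_ifs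
  exacts [ha, div_nonneg hb (by linarith)]

lemma mul_spread (c : ℝ) : c * spread k i j a b = spread k i j (c * a) (c * b) := by
  unfold spread
  split_ifs
  exacts [rfl, (mul_div_assoc c b _).symm]

lemma spread_sum {ι : Type*} (s : Finset ι) (a b : ι → ℝ) :
    spread k i j (∑ x ∈ s, a x) (∑ x ∈ s, b x) = ∑ x ∈ s, spread k i j (a x) (b x) := by
  unfold spread
  split_ifs
  exacts [rfl, sum_div s b _]

lemma spread_sub_one_mul : spread k i j a (((k : ℝ) - 1) * a) = a := by
  unfold spread
  split_ifs with h
  · rfl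
  · have : (2 : ℝ) ≤ k := by exact_mod_cast Fin.nontrivial_iff_two_le.mp ⟨⟨j, i, h⟩⟩
    rw [mul_div_cancel_left₀ _ (by linarith)]

lemma sum_spread (i : Fin k) (a b : ℝ) (hb : k = 1 → b = 0) :
    ∑ j, spread k i j a b = a + b := by
  classical
  have hoff : ∀ j ∈ ({i}ᶜ : Finset (Fin k)), spread k i j a b = b / ((k : ℝ) - 1) :=
    fun j hj => if_neg (by simpa using hj)
  rw [Fintype.sum_eq_add_sum_compl i, spread_self, sum_congr rfl hoff, sum_const, card_compl,
    card_singleton, Fintype.card_fin, nsmul_eq_mul, Nat.cast_sub i.pos, Nat.cast_one]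
  rcases eq_or_ne ((k : ℝ) - 1) 0 with hk | hk
  · have : k = 1 := by exact_mod_cast sub_eq_zero.mp hk
    simp [hk, hb this]
  · rw [mul_div_cancel₀ _ hk]

end spread

namespace IsLPFeasible
variable {X1 X2 Y : Type*} [Fintype X1] [Fintype X2] {k1 k2 : ℕ}
  {r r1 r2 : X1 → X2 → Y → ℝ} {p : X1 → X2 → ℝ}

lemma r1_eq_r (h : IsLPFeasible k1 k2 r r1 r2 p) (hk : k1 = 1) (x1 : X1) (x2 : X2) (y : Y) :
    r1 x1 x2 y = r x1 x2 y := by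
  have hs := h.sum_r1 x2 y
  rw [hk, Nat.cast_one, one_mul] at hs
  exact ((sum_eq_sum_iff_of_le fun x _ => h.r_le_r1 x x2 y).mp hs.symm x1 (mem_univ _)).symm

lemma r2_eq_p (h : IsLPFeasible k1 k2 r r1 r2 p) (hk : k1 = 1) (x1 : X1) (x2 : X2) (y : Y) :
    r2 x1 x2 y = p x1 x2 := by
  have hs := h.sum_p_eq_r2 x2 y
  rw [hk, Nat.cast_one, one_mul] at hs
  exact (sum_eq_sum_iff_of_le fun x _ => h.r2_le_p x x2 y).mp hs.symm x1 (mem_univ _)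

lemma r2_eq_r (h : IsLPFeasible k1 k2 r r1 r2 p) (hk : k2 = 1) (x1 : X1) (x2 : X2) (y : Y) :
    r2 x1 x2 y = r x1 x2 y := by
  have hs := h.sum_r2 x1 y
  rw [hk, Nat.cast_one, one_mul] at hs
  exact ((sum_eq_sum_iff_of_le fun x _ => h.r_le_r2 x1 x y).mp hs.symm x2 (mem_univ _)).symm

lemma r1_eq_p (h : IsLPFeasible k1 k2 r r1 r2 p) (hk : k2 = 1) (x1 : X1) (x2 : X2) (y : Y) :
    r1 x1 x2 y = p x1 x2 := by
  have hs := h.sum_p_eq_r1 x1 y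
  rw [hk, Nat.cast_one, one_mul] at hs
  exact (sum_eq_sum_iff_of_le fun x _ => h.r1_le_p x1 x y).mp hs.symm x2 (mem_univ _)

lemma sum_sum_p (h : IsLPFeasible k1 k2 r r1 r2 p) (y : Y) :
    ∑ x1, ∑ x2, p x1 x2 = (k1 : ℝ) * k2 := by
  rw [sum_comm, sum_congr rfl fun x2 _ => h.sum_p_eq_r2 x2 y, ← mul_sum, sum_comm,
    sum_congr rfl fun x1 _ => h.sum_r2 x1 y, ← mul_sum, h.sum_r y, mul_one]

end IsLPFeasible

section lpBox
variable {X1 X2 Y : Type*} {k1 k2 : ℕ} {r r1 r2 : X1 → X2 → Y → ℝ} {p : X1 → X2 → ℝ}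

noncomputable def lpBox (k1 k2 : ℕ) (r r1 r2 : X1 → X2 → Y → ℝ) (p : X1 → X2 → ℝ)
    (x1 : X1) (x2 : X2) (j1 : Fin k1) (j2 : Fin k2) (i1 : Fin k1) (i2 : Fin k2) (y : Y) : ℝ :=
  spread k1 i1 j1 (spread k2 i2 j2 (r x1 x2 y) (r2 x1 x2 y - r x1 x2 y))
      (spread k2 i2 j2 (r1 x1 x2 y - r x1 x2 y) (p x1 x2 - r1 x1 x2 y - r2 x1 x2 y + r x1 x2 y)) /
    (k1 * k2)

lemma sum_x1_lpBox [Fintype X1] [Fintype X2] (h : IsLPFeasible k1 k2 r r1 r2 p) (x2 : X2)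
    (j1 : Fin k1) (j2 : Fin k2) (i1 : Fin k1) (i2 : Fin k2) (y : Y) :
    ∑ x1, lpBox k1 k2 r r1 r2 p x1 x2 j1 j2 i1 i2 y =
      spread k2 i2 j2 (∑ x1, r x1 x2 y) (∑ x1, r2 x1 x2 y - ∑ x1, r x1 x2 y) / (k1 * k2) := by
  simp only [lpBox, ← sum_div, ← spread_sum, sum_sub_distrib, sum_add_distrib, h.sum_r1 x2 y,
    h.sum_p_eq_r2 x2 y]
  congr 1
  -- the constraints make the off-diagonal argument `k1 - 1` times the diagonal one
  convert spread_sub_one_mul (i := i1) (j := j1) using 2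
  rw [mul_spread]
  congr 1 <;> ring

lemma sum_x2_lpBox [Fintype X1] [Fintype X2] (h : IsLPFeasible k1 k2 r r1 r2 p) (x1 : X1)
    (j1 : Fin k1) (j2 : Fin k2) (i1 : Fin k1) (i2 : Fin k2) (y : Y) :
    ∑ x2, lpBox k1 k2 r r1 r2 p x1 x2 j1 j2 i1 i2 y =
      spread k1 i1 j1 (∑ x2, r x1 x2 y) (∑ x2, r1 x1 x2 y - ∑ x2, r x1 x2 y) / (k1 * k2) := by
  simp only [lpBox, ← sum_div, ← spread_sum, sum_sub_distrib, sum_add_distrib, h.sum_r2 x1 y,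
    h.sum_p_eq_r1 x1 y]
  congr 2
  · convert spread_sub_one_mul (i := i2) (j := j2) using 2
    ring
  · convert spread_sub_one_mul (i := i2) (j := j2) using 2
    ring

lemma sum_sum_lpBox [Fintype X1] [Fintype X2] (h : IsLPFeasible k1 k2 r r1 r2 p)
    (x1 : X1) (x2 : X2) (i1 : Fin k1) (i2 : Fin k2) (y : Y) :
    ∑ j1, ∑ j2, lpBox k1 k2 r r1 r2 p x1 x2 j1 j2 i1 i2 y = p x1 x2 / (k1 * k2) := by
  have hr2 : k2 = 1 → r2 x1 x2 y - r x1 x2 y = 0 := fun hk => by rw [h.r2_eq_r hk, sub_self]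
  have hp2 : k2 = 1 → p x1 x2 - r1 x1 x2 y - r2 x1 x2 y + r x1 x2 y = 0 := fun hk => by
    rw [h.r1_eq_p hk, h.r2_eq_r hk]; ring
  have hp1 : k1 = 1 → r1 x1 x2 y - r x1 x2 y + (p x1 x2 - r1 x1 x2 y - r2 x1 x2 y + r x1 x2 y)
      = 0 := fun hk => by
    rw [h.r1_eq_r hk, h.r2_eq_p hk]; ring
  simp only [lpBox, ← sum_div, ← spread_sum]
  rw [sum_spread _ _ _ hr2, sum_spread _ _ _ hp2, sum_spread _ _ _ hp1]
  ring

lemma lpBox_self (x1 : X1) (x2 : X2) (i1 : Fin k1) (i2 : Fin k2) (y : Y) :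
    lpBox k1 k2 r r1 r2 p x1 x2 i1 i2 i1 i2 y = r x1 x2 y / (k1 * k2) := by
  simp [lpBox]

theorem IsLPFeasible.isNSBox_lpBox [Fintype X1] [Fintype X2] [Fintype Y]
    (h : IsLPFeasible k1 k2 r r1 r2 p) :
    IsNSBox k1 k2 (lpBox k1 k2 r r1 r2 p) := by
  refine ⟨fun x1 x2 j1 j2 i1 i2 y => ?_, fun i1 i2 y => ?_,
    fun x2 j1 j2 i1 i1' i2 y => ?_, fun x1 j1 j2 i1 i2 i2' y => ?_,
    fun x1 x2 i1 i2 y y' => ?_⟩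
  · have := h.r_le_r1 x1 x2 y
    have := h.r_le_r2 x1 x2 y
    exact div_nonneg (spread_nonneg (spread_nonneg (h.r_nonneg x1 x2 y) (by linarith))
      (spread_nonneg (by linarith) (h.inclusion_exclusion x1 x2 y))) (by positivity)
  · have : (k1 : ℝ) * k2 ≠ 0 := by
      have := i1.pos
      have := i2.pos
      positivity
    simp only [sum_sum_lpBox h, ← sum_div, h.sum_sum_p y, div_self this]
  · rw [sum_x1_lpBox h, sum_x1_lpBox h]
  · rw [sum_x2_lpBox h, sum_x2_lpBox h]
  · rw [sum_sum_lpBox h, sum_sum_lpBox h]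

lemma sum_mul_lpBox_diag [Fintype X1] [Fintype X2] [Fintype Y] (W : X1 → X2 → Y → ℝ)
    (hk1 : 0 < k1) (hk2 : 0 < k2) :
    ∑ i1, ∑ i2, ∑ x1, ∑ x2, ∑ y, W x1 x2 y * lpBox k1 k2 r r1 r2 p x1 x2 i1 i2 i1 i2 y =
      ∑ x1, ∑ x2, ∑ y, W x1 x2 y * r x1 x2 y := by
  simp only [lpBox_self, mul_div_assoc', ← sum_div, sum_const, card_univ, Fintype.card_fin,
    nsmul_eq_mul]
  field_simp

end lpBox

theorem SNS_eq_LP {X1 X2 Y : Type*} [Fintype X1] [Fintype X2] [Fintype Y]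
    (W : X1 → X2 → Y → ℝ)
    (k1 k2 : ℕ) (hk1 : 0 < k1) (hk2 : 0 < k2) :
    SNS W k1 k2 =
      sSup {s : ℝ | ∃ (r r1 r2 : X1 → X2 → Y → ℝ) (p : X1 → X2 → ℝ),
        (∀ y, ∑ x1, ∑ x2, r x1 x2 y = 1) ∧
        (∀ x2 y, ∑ x1, r1 x1 x2 y = (k1 : ℝ) * ∑ x1, r x1 x2 y) ∧
        (∀ x1 y, ∑ x2, r2 x1 x2 y = (k2 : ℝ) * ∑ x2, r x1 x2 y) ∧
        (∀ x2 y, ∑ x1, p x1 x2 = (k1 : ℝ) * ∑ x1, r2 x1 x2 y) ∧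
        (∀ x1 y, ∑ x2, p x1 x2 = (k2 : ℝ) * ∑ x2, r1 x1 x2 y) ∧
        (∀ x1 x2 y, 0 ≤ r x1 x2 y) ∧
        (∀ x1 x2 y, r x1 x2 y ≤ r1 x1 x2 y) ∧ (∀ x1 x2 y, r1 x1 x2 y ≤ p x1 x2) ∧
        (∀ x1 x2 y, r x1 x2 y ≤ r2 x1 x2 y) ∧ (∀ x1 x2 y, r2 x1 x2 y ≤ p x1 x2) ∧
        (∀ x1 x2 y, 0 ≤ p x1 x2 - r1 x1 x2 y - r2 x1 x2 y + r x1 x2 y) ∧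
        s = (1 / ((k1 : ℝ) * (k2 : ℝ))) * ∑ x1, ∑ x2, ∑ y,
          W x1 x2 y * r x1 x2 y} := by
  unfold SNS
  congr 1
  ext s
  constructor
  · rintro ⟨P, hP, rfl⟩
    obtain ⟨p, hp⟩ := hP.exists_eq_lpP
    obtain ⟨h1, h2, h3, h4, h5, h6, h7, h8, h9, h10, h11⟩ := hP.isLPFeasible hk1 hk2 hp
    exact ⟨_, _, _, p, h1, h2, h3, h4, h5, h6, h7, h8, h9, h10, h11,
      by rw [sum_mul_diag_eq_sum_mul_lpR]⟩
  · rintro ⟨r, r1, r2, p, h1, h2, h3, h4, h5, h6, h7, h8, h9, h10, h11, rfl⟩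
    have h : IsLPFeasible k1 k2 r r1 r2 p := ⟨h1, h2, h3, h4, h5, h6, h7, h8, h9, h10, h11⟩
    exact ⟨lpBox k1 k2 r r1 r2 p, h.isNSBox_lpBox, by rw [sum_mul_lpBox_diag W hk1 hk2]⟩
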